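/- Let ℱ be a countable family of measurable functions on (𝒳, 𝒮) with measurable envelope F, let μ be a probability measure with ∫ F dμ < ∞, and suppose N_[](ε, ℱ, μ) < ∞ for every ε > 0, where the brackets may be taken with μ-integrable endpoints. If X = X₁, X₂, … is a stationary ergodic process with values in (𝒳, 𝒮) and marginal distribution μ, then sup_{f ∈ ℱ} | n⁻¹ Σ_{i=1}^n f(X_i) − ∫ f dμ | → 0 almost surely as n → ∞. -/
import Mathlib


open MeasureTheory Set Filter
open Topology

/-- `𝒞` shatters the finite set `D` if every subset of `D` is cut out by some `C ∈ 𝒞`. -/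
def Shatters {X : Type*} (𝒞 : Set (Set X)) (D : Finset X) : Prop :=
  ∀ B ⊆ D, ∃ C ∈ 𝒞, ∀ x ∈ D, x ∈ C ↔ x ∈ B

/-- `𝒞` has finite VC dimension: the cardinalities of shattered finite sets are bounded. -/
def FiniteVC {X : Type*} (𝒞 : Set (Set X)) : Prop :=
  ∃ k : ℕ, ∀ D : Finset X, Shatters 𝒞 D → D.card ≤ k

/-- `π` is a finite measurable partition of the whole space. -/
def IsFinitePartition {X : Type*} [MeasurableSpace X] (π : Set (Set X)) : Prop :=
  π.Finite ∧ (∀ A ∈ π, MeasurableSet A) ∧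
    (∀ A ∈ π, ∀ B ∈ π, A ≠ B → Disjoint A B) ∧ ⋃₀ π = Set.univ

/-- The `π`-boundary of `C`: union of the cells of `π` meeting both `C` and `Cᶜ`
with positive measure. -/
def piBoundary {X : Type*} [MeasurableSpace X] (μ : Measure X) (π : Set (Set X))
    (C : Set X) : Set X :=
  ⋃₀ {A ∈ π | 0 < μ (A ∩ C) * μ (A ∩ Cᶜ)}

/-- `𝒞` is finitely approximable w.r.t. `μ`: for every `ε > 0` there is a finite measurable
partition `π` such that `μ (∂(C : π)) ≤ ε` for every `C ∈ 𝒞`. -/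
def FinitelyApproximable {X : Type*} [MeasurableSpace X] (μ : Measure X)
    (𝒞 : Set (Set X)) : Prop :=
  ∀ ε : ENNReal, 0 < ε → ∃ π : Set (Set X), IsFinitePartition π ∧
    ∀ C ∈ 𝒞, μ (piBoundary μ π C) ≤ ε



set_option linter.unusedSectionVars false
set_option linter.unnecessarySimpa false

noncomputable section BirkhoffAux

variable {Ω : Type*} [MeasurableSpace Ω]

/-- Birkhoff sums. -/
def bS (T : Ω → Ω) (f : Ω → ℝ) (n : ℕ) (x : Ω) : ℝ := ∑ i ∈ Finset.range n, f (T^[i] x)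

/-- Running maxima of Birkhoff sums. -/
def bM (T : Ω → Ω) (f : Ω → ℝ) : ℕ → Ω → ℝ
  | 0 => fun _ => 0
  | n + 1 => fun x => max (bM T f n x) (bS T f (n + 1) x)

theorem bS_zero (T : Ω → Ω) (f : Ω → ℝ) (x : Ω) : bS T f 0 x = 0 := by simp [bS]

theorem bS_succ' (T : Ω → Ω) (f : Ω → ℝ) (n : ℕ) (x : Ω) :
    bS T f (n + 1) x = f x + bS T f n (T x) := by
  simp only [bS, Finset.sum_range_succ', Function.iterate_succ_apply,
    Function.iterate_zero_apply]
  ring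

theorem measurable_bS {T : Ω → Ω} {f : Ω → ℝ} (hT : Measurable T) (hf : Measurable f) (n : ℕ) :
    Measurable (bS T f n) := by
  apply Finset.measurable_sum
  exact fun i _ => hf.comp (hT.iterate i)

theorem integrable_bS {ℙ : Measure Ω} {T : Ω → Ω} {f : Ω → ℝ}
    (hT : MeasurePreserving T ℙ ℙ) (hf : Integrable f ℙ) (n : ℕ) :
    Integrable (bS T f n) ℙ := by
  have : Integrable (fun x => ∑ i ∈ Finset.range n, f (T^[i] x)) ℙ := by
    apply integrable_finset_sum
    intro i _
    exact ((hT.iterate i).integrable_comp hf.1).mpr hf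
  exact this

theorem bM_nonneg (T : Ω → Ω) (f : Ω → ℝ) (n : ℕ) (x : Ω) : 0 ≤ bM T f n x := by
  induction n with
  | zero => simp [bM]
  | succ n ih => exact le_trans ih (le_max_left _ _)

theorem bM_mono (T : Ω → Ω) (f : Ω → ℝ) (n : ℕ) (x : Ω) : bM T f n x ≤ bM T f (n + 1) x :=
  le_max_left _ _

theorem bS_le_bM (T : Ω → Ω) (f : Ω → ℝ) {k n : ℕ} (h : k ≤ n) (x : Ω) :
    bS T f k x ≤ bM T f n x := by
  induction n with
  | zero =>
    interval_cases k
    simp [bS, bM]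
  | succ n ih =>
    rcases Nat.lt_or_ge k (n + 1) with hk | hk
    · exact le_trans (ih (by omega)) (le_max_left _ _)
    · have : k = n + 1 := by omega
      subst this
      exact le_max_right _ _

theorem measurable_bM {T : Ω → Ω} {f : Ω → ℝ} (hT : Measurable T) (hf : Measurable f) (n : ℕ) :
    Measurable (bM T f n) := by
  induction n with
  | zero => simpa [bM] using measurable_const
  | succ n ih => exact ih.max (measurable_bS hT hf (n + 1))

theorem integrable_bM {ℙ : Measure Ω} {T : Ω → Ω} {f : Ω → ℝ}
    (hT : MeasurePreserving T ℙ ℙ) (hf : Integrable f ℙ) (n : ℕ) :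
    Integrable (bM T f n) ℙ := by
  induction n with
  | zero => simpa [bM] using integrable_const (0 : ℝ)
  | succ n ih =>
    have := ih.sup (integrable_bS hT hf (n + 1))
    simpa [bM, Pi.sup_def] using this

theorem exists_eq_bM {T : Ω → Ω} {f : Ω → ℝ} {n : ℕ} {x : Ω} (h : 0 < bM T f n x) :
    ∃ k, 1 ≤ k ∧ k ≤ n ∧ bM T f n x = bS T f k x := by
  induction n with
  | zero => simp [bM] at h
  | succ n ih =>
    rcases le_total (bS T f (n + 1) x) (bM T f n x) with hle | hle
    · have hmax : bM T f (n + 1) x = bM T f n x := max_eq_left hle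
      rw [hmax] at h ⊢
      obtain ⟨k, h1, h2, h3⟩ := ih h
      exact ⟨k, h1, by omega, h3⟩
    · exact ⟨n + 1, by omega, le_refl _, max_eq_right hle⟩

theorem pos_bM_iff {T : Ω → Ω} {f : Ω → ℝ} {n : ℕ} {x : Ω} :
    0 < bM T f n x ↔ ∃ k, 1 ≤ k ∧ k ≤ n ∧ 0 < bS T f k x := by
  constructor
  · intro h
    obtain ⟨k, h1, h2, h3⟩ := exists_eq_bM h
    exact ⟨k, h1, h2, h3 ▸ h⟩
  · rintro ⟨k, h1, h2, h3⟩
    exact lt_of_lt_of_le h3 (bS_le_bM T f h2 x)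

theorem bM_le_add {T : Ω → Ω} {f : Ω → ℝ} {n : ℕ} {x : Ω} (h : 0 < bM T f n x) :
    bM T f n x ≤ f x + bM T f n (T x) := by
  obtain ⟨k, h1, h2, h3⟩ := exists_eq_bM h
  obtain ⟨j, rfl⟩ : ∃ j, k = j + 1 := ⟨k - 1, by omega⟩
  rw [h3, bS_succ']
  have : bS T f j (T x) ≤ bM T f n (T x) := bS_le_bM T f (by omega) (T x)
  linarith

/-- The maximal ergodic theorem. -/
theorem maximal_ergodic (ℙ : Measure Ω) [IsProbabilityMeasure ℙ] {T : Ω → Ω} {f : Ω → ℝ}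
    (hT : MeasurePreserving T ℙ ℙ) (hfm : Measurable f) (hf : Integrable f ℙ) :
    0 ≤ ∫ x in {x | ∃ k, 1 ≤ k ∧ 0 < bS T f k x}, f x ∂ℙ := by
  set A : ℕ → Set Ω := fun n => {x | 0 < bM T f n x} with hA
  have hAmeas : ∀ n, MeasurableSet (A n) :=
    fun n => measurableSet_lt measurable_const (measurable_bM hT.measurable hfm n)
  have hAmono : Monotone A := by
    apply monotone_nat_of_le_succ
    intro n x hx
    exact lt_of_lt_of_le hx (bM_mono T f n x)
  have hAU : (⋃ n, A n) = {x | ∃ k, 1 ≤ k ∧ 0 < bS T f k x} := by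
    ext x
    simp only [mem_iUnion, hA, mem_setOf_eq, pos_bM_iff]
    constructor
    · rintro ⟨n, k, h1, h2, h3⟩; exact ⟨k, h1, h3⟩
    · rintro ⟨k, h1, h3⟩; exact ⟨k, k, h1, le_refl _, h3⟩
  have hstep : ∀ n, 0 ≤ ∫ x in A n, f x ∂ℙ := by
    intro n
    have hMint : Integrable (bM T f n) ℙ := integrable_bM hT hf n
    have hMTint : Integrable (fun x => bM T f n (T x)) ℙ :=
      (hT.integrable_comp hMint.1).mpr hMint
    have h1 : ∫ x in A n, (bM T f n x - bM T f n (T x)) ∂ℙ ≤ ∫ x in A n, f x ∂ℙ := by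
      apply setIntegral_mono_on (hMint.sub hMTint).integrableOn hf.integrableOn (hAmeas n)
      intro x hx
      simp only [Pi.sub_apply]
      have := bM_le_add (show 0 < bM T f n x from hx)
      linarith
    have h2 : ∫ x in A n, (bM T f n x - bM T f n (T x)) ∂ℙ
        = ∫ x in A n, bM T f n x ∂ℙ - ∫ x in A n, bM T f n (T x) ∂ℙ :=
      integral_sub hMint.integrableOn hMTint.integrableOn
    have h3 : ∫ x in A n, bM T f n (T x) ∂ℙ ≤ ∫ x, bM T f n (T x) ∂ℙ :=
      setIntegral_le_integral hMTint (ae_of_all _ fun x => bM_nonneg T f n (T x))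
    have h4 : ∫ x, bM T f n (T x) ∂ℙ = ∫ x, bM T f n x ∂ℙ := by
      have : ∫ y, bM T f n y ∂(Measure.map T ℙ) = ∫ x, bM T f n (T x) ∂ℙ :=
        integral_map hT.measurable.aemeasurable (by rw [hT.map_eq]; exact hMint.1)
      rw [hT.map_eq] at this
      exact this.symm
    have h5 : ∫ x, bM T f n x ∂ℙ = ∫ x in A n, bM T f n x ∂ℙ := by
      rw [← integral_add_compl (hAmeas n) hMint]
      have hz : ∫ x in (A n)ᶜ, bM T f n x ∂ℙ = 0 := by
        have : ∫ x in (A n)ᶜ, bM T f n x ∂ℙ = ∫ x in (A n)ᶜ, (0 : ℝ) ∂ℙ := by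
          apply setIntegral_congr_fun (hAmeas n).compl
          intro x hx
          exact le_antisymm (not_lt.mp hx) (bM_nonneg T f n x)
        rw [this, integral_zero]
      rw [hz, add_zero]
    linarith
  have hlim := tendsto_setIntegral_of_monotone hAmeas hAmono
    (by rw [hAU]; exact hf.integrableOn)
  rw [hAU] at hlim
  exact ge_of_tendsto' hlim hstep

/-- One-sided Birkhoff bound for an ergodic transformation. -/
theorem birkhoff_upper {ℙ : Measure Ω} [IsProbabilityMeasure ℙ] {T : Ω → Ω} {f : Ω → ℝ}
    (hT : Ergodic T ℙ) (hfm : Measurable f) (hf : Integrable f ℙ) {ε : ℝ} (hε : 0 < ε) :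
    ∀ᵐ x ∂ℙ, ∀ᶠ n in atTop, bS T f n x ≤ n * (∫ x, f x ∂ℙ + ε) := by
  set I := ∫ x, f x ∂ℙ with hI
  set E : ℝ → Set Ω :=
    fun c => ⋂ N : ℕ, ⋃ n : ℕ, ⋃ _ : N ≤ n, {x | c * n < bS T f n x} with hE
  have hEmem : ∀ c x, x ∈ E c ↔ ∀ N : ℕ, ∃ n, N ≤ n ∧ c * n < bS T f n x := by
    intro c x
    simp [hE, mem_iInter, mem_iUnion]
  have hEmeas : ∀ c, MeasurableSet (E c) := by
    intro c
    apply MeasurableSet.iInter; intro N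
    apply MeasurableSet.iUnion; intro n
    apply MeasurableSet.iUnion; intro _
    exact measurableSet_lt measurable_const (measurable_bS hT.measurable hfm n)
  have hshift1 : ∀ c' c : ℝ, c' < c → ∀ x, T x ∈ E c → x ∈ E c' := by
    intro c' c hlt x hx
    rw [hEmem]
    intro N
    have htb : Tendsto (fun n : ℕ => (c' - c) * n + c') atTop atBot :=
      tendsto_atBot_add_const_right _ c'
        ((tendsto_natCast_atTop_atTop (R := ℝ)).const_mul_atTop_of_neg (by linarith))
    obtain ⟨n₀, hn₀⟩ := eventually_atTop.mp (htb.eventually_le_atBot (f x))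
    obtain ⟨n, hn1, hn2⟩ := (hEmem c (T x)).mp hx (max N n₀)
    refine ⟨n + 1, by omega, ?_⟩
    have h1 : (c' - c) * n + c' ≤ f x := hn₀ n (le_trans (le_max_right _ _) hn1)
    rw [bS_succ']
    push_cast
    nlinarith
  have hshift2 : ∀ c' c : ℝ, c' < c → ∀ x, x ∈ E c → T x ∈ E c' := by
    intro c' c hlt x hx
    rw [hEmem]
    intro N
    have htb : Tendsto (fun n : ℕ => (c' - c) * n + (f x - c)) atTop atBot :=
      tendsto_atBot_add_const_right _ _
        ((tendsto_natCast_atTop_atTop (R := ℝ)).const_mul_atTop_of_neg (by linarith))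
    obtain ⟨n₀, hn₀⟩ := eventually_atTop.mp (htb.eventually_le_atBot 0)
    obtain ⟨n, hn1, hn2⟩ := (hEmem c x).mp hx (max (N + 1) (n₀ + 1))
    obtain ⟨m, rfl⟩ : ∃ m, n = m + 1 := ⟨n - 1, by omega⟩
    refine ⟨m, by omega, ?_⟩
    have h1 : (c' - c) * m + (f x - c) ≤ 0 := hn₀ m (by omega)
    rw [bS_succ'] at hn2
    push_cast at hn2 ⊢
    nlinarith
  set c₀ : ℝ := I + ε / 2 with hc₀
  set D : Set Ω := ⋃ q : ℚ, ⋃ _ : c₀ < (q : ℝ), E (q : ℝ) with hDdef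
  have hDmeas : MeasurableSet D :=
    MeasurableSet.iUnion fun q => MeasurableSet.iUnion fun _ => hEmeas _
  have hDinv : T ⁻¹' D = D := by
    apply subset_antisymm
    · intro x hx
      simp only [hDdef, mem_preimage, mem_iUnion] at hx ⊢
      obtain ⟨q, hq, hxq⟩ := hx
      obtain ⟨q', hq1, hq2⟩ := exists_rat_btwn hq
      exact ⟨q', hq1, hshift1 _ _ (by exact_mod_cast hq2) x hxq⟩
    · intro x hx
      simp only [hDdef, mem_preimage, mem_iUnion] at hx ⊢
      obtain ⟨q, hq, hxq⟩ := hx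
      obtain ⟨q', hq1, hq2⟩ := exists_rat_btwn hq
      exact ⟨q', hq1, hshift2 _ _ (by exact_mod_cast hq2) x hxq⟩
  have hD0 : ℙ D = 0 := by
    rcases hT.ae_empty_or_univ hDmeas hDinv with h | h
    · exact ae_eq_empty.mp h
    · exfalso
      have hDc : ℙ Dᶜ = 0 := ae_eq_univ.mp h
      set g : Ω → ℝ := fun x => f x - c₀ with hg
      have hgm : Measurable g := hfm.sub measurable_const
      have hgint : Integrable g ℙ := hf.sub (integrable_const c₀)
      have hbSg : ∀ (k : ℕ) x, bS T g k x = bS T f k x - k * c₀ := by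
        intro k x
        simp [bS, hg, Finset.sum_sub_distrib, mul_comm]
      have hsub : D ⊆ {x | ∃ k, 1 ≤ k ∧ 0 < bS T g k x} := by
        intro x hx
        simp only [hDdef, mem_iUnion] at hx
        obtain ⟨q, hq, hxq⟩ := hx
        obtain ⟨n, hn1, hn2⟩ := (hEmem _ x).mp hxq 1
        refine ⟨n, hn1, ?_⟩
        rw [hbSg]
        have hn' : (1 : ℝ) ≤ n := by exact_mod_cast hn1
        nlinarith
      have hEgmeas : MeasurableSet {x | ∃ k, 1 ≤ k ∧ 0 < bS T g k x} := by
        have : {x | ∃ k, 1 ≤ k ∧ 0 < bS T g k x}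
            = ⋃ k : ℕ, ⋃ _ : 1 ≤ k, {x | 0 < bS T g k x} := by
          ext x; simp
        rw [this]
        exact MeasurableSet.iUnion fun k => MeasurableSet.iUnion fun _ =>
          measurableSet_lt measurable_const (measurable_bS hT.measurable hgm k)
      have hmax := maximal_ergodic ℙ hT.toMeasurePreserving hgm hgint
      have hcompl : ℙ {x | ∃ k, 1 ≤ k ∧ 0 < bS T g k x}ᶜ = 0 :=
        measure_mono_null (compl_subset_compl.mpr hsub) hDc
      have heq : ∫ x in {x | ∃ k, 1 ≤ k ∧ 0 < bS T g k x}, g x ∂ℙ = ∫ x, g x ∂ℙ := by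
        rw [← integral_add_compl hEgmeas hgint]
        have : ℙ.restrict {x | ∃ k, 1 ≤ k ∧ 0 < bS T g k x}ᶜ = 0 :=
          Measure.restrict_eq_zero.mpr hcompl
        rw [this, integral_zero_measure, add_zero]
      have hIg : ∫ x, g x ∂ℙ = -(ε / 2) := by
        rw [hg]
        rw [integral_sub hf (integrable_const c₀), integral_const]
        simp [hc₀, hI]
      rw [heq, hIg] at hmax
      linarith
  have hae : ∀ᵐ x ∂ℙ, x ∉ D := measure_eq_zero_iff_ae_notMem.mp hD0
  filter_upwards [hae] with x hx
  obtain ⟨q, hq1, hq2⟩ := exists_rat_btwn (show c₀ < I + ε by rw [hc₀]; linarith)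
  have hxq : x ∉ E (q : ℝ) := fun hmem => hx (by
    simp only [hDdef, mem_iUnion]; exact ⟨q, hq1, hmem⟩)
  rw [hEmem] at hxq
  push_neg at hxq
  obtain ⟨N, hN⟩ := hxq
  rw [eventually_atTop]
  refine ⟨N, fun n hn => ?_⟩
  have h1 : bS T f n x ≤ (q : ℝ) * n := hN n hn
  have h2 : (q : ℝ) * n ≤ (I + ε) * n :=
    mul_le_mul_of_nonneg_right hq2.le (by positivity)
  calc bS T f n x ≤ (q : ℝ) * n := h1
    _ ≤ (I + ε) * n := h2
    _ = n * (I + ε) := by ring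

/-- Birkhoff's pointwise ergodic theorem for an ergodic transformation. -/
theorem birkhoff_ergodic {ℙ : Measure Ω} [IsProbabilityMeasure ℙ] {T : Ω → Ω} {f : Ω → ℝ}
    (hT : Ergodic T ℙ) (hfm : Measurable f) (hf : Integrable f ℙ) :
    ∀ᵐ x ∂ℙ, Tendsto (fun n : ℕ => (n : ℝ)⁻¹ * bS T f n x) atTop (𝓝 (∫ x, f x ∂ℙ)) := by
  set I := ∫ x, f x ∂ℙ with hI
  have hneg : ∀ (n : ℕ) x, bS T (fun y => -f y) n x = -bS T f n x := by
    intro n x; simp [bS]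
  have hup : ∀ k : ℕ, ∀ᵐ x ∂ℙ, ∀ᶠ n in atTop,
      bS T f n x ≤ n * (I + 1 / (k + 1)) :=
    fun k => birkhoff_upper hT hfm hf (by positivity)
  have hlo : ∀ k : ℕ, ∀ᵐ x ∂ℙ, ∀ᶠ n : ℕ in atTop,
      (n : ℝ) * (I - 1 / (k + 1)) ≤ bS T f n x := by
    intro k
    have h := birkhoff_upper (f := fun y => -f y) hT hfm.neg hf.neg
      (ε := 1 / (k + 1)) (by positivity)
    filter_upwards [h] with x hx
    filter_upwards [hx] with n hn
    rw [hneg] at hn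
    have hIneg : ∫ x, -f x ∂ℙ = -I := by rw [integral_neg, hI]
    rw [hIneg] at hn
    nlinarith [hn]
  have hupall := ae_all_iff.mpr hup
  have hloall := ae_all_iff.mpr hlo
  filter_upwards [hupall, hloall] with x hxu hxl
  rw [Metric.tendsto_atTop]
  intro ε hε
  obtain ⟨k, hk⟩ := exists_nat_one_div_lt hε
  obtain ⟨N₁, hN₁⟩ := eventually_atTop.mp (hxu k)
  obtain ⟨N₂, hN₂⟩ := eventually_atTop.mp (hxl k)
  refine ⟨max (max N₁ N₂) 1, fun n hn => ?_⟩
  have hn1 : 1 ≤ n := le_trans (le_max_right _ _) hn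
  have hnN₁ : N₁ ≤ n := le_trans (le_trans (le_max_left _ _) (le_max_left _ _)) hn
  have hnN₂ : N₂ ≤ n := le_trans (le_trans (le_max_right _ _) (le_max_left _ _)) hn
  have hnpos : (0 : ℝ) < n := by exact_mod_cast hn1
  have hub := hN₁ n hnN₁
  have hlb := hN₂ n hnN₂
  rw [Real.dist_eq]
  have habs : |(n : ℝ)⁻¹ * bS T f n x - I| ≤ 1 / (k + 1) := by
    rw [abs_le]
    constructor
    · have : (n : ℝ)⁻¹ * ((n : ℝ) * (I - 1 / (k + 1))) ≤ (n : ℝ)⁻¹ * bS T f n x :=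
        mul_le_mul_of_nonneg_left hlb (by positivity)
      rw [inv_mul_cancel_left₀ (ne_of_gt hnpos)] at this
      linarith
    · have : (n : ℝ)⁻¹ * bS T f n x ≤ (n : ℝ)⁻¹ * ((n : ℝ) * (I + 1 / (k + 1))) :=
        mul_le_mul_of_nonneg_left hub (by positivity)
      rw [inv_mul_cancel_left₀ (ne_of_gt hnpos)] at this
      linarith
  exact lt_of_le_of_lt habs hk

end BirkhoffAux


/-- **Blum–DeHardt law of large numbers under ergodic sampling.** If a countable family `ℱ`
with integrable envelope `F` has finite bracketing numbers (with integrable bracket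
endpoints) for every `ε > 0`, then the empirical means converge uniformly over `ℱ` to the
true means, almost surely, along any stationary ergodic process with marginal `μ`. -/
theorem ergodic_ulln_of_finite_bracketing {X : Type*} [MeasurableSpace X]
    (ℱ : Set (X → ℝ)) (hcount : ℱ.Countable) (hmeas : ∀ f ∈ ℱ, Measurable f)
    (F : X → ℝ) (hF : Measurable F) (hF0 : ∀ x, 0 ≤ F x)
    (henv : ∀ f ∈ ℱ, ∀ x, |f x| ≤ F x)
    {Ω : Type*} [MeasurableSpace Ω] (ℙ : Measure Ω) [IsProbabilityMeasure ℙ]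
    (T : Ω → Ω) (hT : Ergodic T ℙ) (X₁ : Ω → X) (hX₁ : Measurable X₁)
    (μ : Measure X) (hμ : Measure.map X₁ ℙ = μ) (hFint : Integrable F μ)
    (hbr : ∀ ε : ℝ, 0 < ε → ∃ n : ℕ, ∃ g h : Fin n → X → ℝ,
      (∀ i, Measurable (g i) ∧ Measurable (h i) ∧ Integrable (g i) μ ∧
        Integrable (h i) μ ∧ (∀ x, g i x ≤ h i x) ∧
        ∫ x, (h i x - g i x) ∂μ ≤ ε) ∧
      ∀ f ∈ ℱ, ∃ i, ∀ x, g i x ≤ f x ∧ f x ≤ h i x) :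
    ∀ᵐ ω ∂ℙ, Filter.Tendsto
      (fun n : ℕ => ⨆ f : ℱ, |(n : ℝ)⁻¹ * ∑ i ∈ Finset.range n,
          (f : X → ℝ) (X₁ (T^[i] ω)) - ∫ x, (f : X → ℝ) x ∂μ|)
      Filter.atTop (nhds 0) := by
  have hfint : ∀ f ∈ ℱ, Integrable f μ := by
    intro f hf
    refine hFint.mono' (hmeas f hf).aestronglyMeasurable (ae_of_all _ fun x => ?_)
    simpa [Real.norm_eq_abs] using henv f hf x
  have key : ∀ m : ℕ, ∀ᵐ ω ∂ℙ, ∀ᶠ n : ℕ in atTop,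
      (⨆ f : ℱ, |(n : ℝ)⁻¹ * ∑ i ∈ Finset.range n,
        (f : X → ℝ) (X₁ (T^[i] ω)) - ∫ x, (f : X → ℝ) x ∂μ|) ≤ 2 / ((m : ℝ) + 1) := by
    intro m
    have hε' : (0:ℝ) < 1 / ((m:ℝ) + 1) := by positivity
    obtain ⟨nb, g, h, hgh, hcov⟩ := hbr (1 / ((m:ℝ) + 1)) hε'
    have hmapG : ∀ i : Fin nb, Integrable (g i) (Measure.map X₁ ℙ) := by
      intro i; rw [hμ]; exact (hgh i).2.2.1
    have hmapH : ∀ i : Fin nb, Integrable (h i) (Measure.map X₁ ℙ) := by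
      intro i; rw [hμ]; exact (hgh i).2.2.2.1
    have hGint : ∀ i : Fin nb, Integrable (fun ω => g i (X₁ ω)) ℙ := fun i =>
      (integrable_map_measure (hmapG i).1 hX₁.aemeasurable).mp (hmapG i)
    have hHint : ∀ i : Fin nb, Integrable (fun ω => h i (X₁ ω)) ℙ := fun i =>
      (integrable_map_measure (hmapH i).1 hX₁.aemeasurable).mp (hmapH i)
    have hGI : ∀ i : Fin nb, ∫ ω, g i (X₁ ω) ∂ℙ = ∫ x, g i x ∂μ := by
      intro i; rw [← hμ]
      exact (integral_map hX₁.aemeasurable (hmapG i).1).symm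
    have hHI : ∀ i : Fin nb, ∫ ω, h i (X₁ ω) ∂ℙ = ∫ x, h i x ∂μ := by
      intro i; rw [← hμ]
      exact (integral_map hX₁.aemeasurable (hmapH i).1).symm
    have hbird : ∀ᵐ ω ∂ℙ, ∀ i : Fin nb,
        Tendsto (fun n : ℕ => (n : ℝ)⁻¹ * ∑ j ∈ Finset.range n, g i (X₁ (T^[j] ω)))
          atTop (𝓝 (∫ x, g i x ∂μ)) ∧
        Tendsto (fun n : ℕ => (n : ℝ)⁻¹ * ∑ j ∈ Finset.range n, h i (X₁ (T^[j] ω)))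
          atTop (𝓝 (∫ x, h i x ∂μ)) := by
      rw [ae_all_iff]
      intro i
      have h1 := birkhoff_ergodic (f := fun ω => g i (X₁ ω)) hT ((hgh i).1.comp hX₁) (hGint i)
      have h2 := birkhoff_ergodic (f := fun ω => h i (X₁ ω)) hT ((hgh i).2.1.comp hX₁) (hHint i)
      rw [hGI i] at h1; rw [hHI i] at h2
      filter_upwards [h1, h2] with ω hω1 hω2
      constructor
      · simpa [bS] using hω1
      · simpa [bS] using hω2
    filter_upwards [hbird] with ω hω
    set B : ℕ → ℝ := fun n => ∑ i : Fin nb,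
      (|(n : ℝ)⁻¹ * ∑ j ∈ Finset.range n, h i (X₁ (T^[j] ω)) - ∫ x, h i x ∂μ| +
       |(n : ℝ)⁻¹ * ∑ j ∈ Finset.range n, g i (X₁ (T^[j] ω)) - ∫ x, g i x ∂μ|) with hB
    have hBtend : Tendsto B atTop (𝓝 0) := by
      have hz : Tendsto B atTop (𝓝 (∑ _i : Fin nb, ((0:ℝ) + 0))) := by
        apply tendsto_finset_sum
        intro i _
        have h1 : Tendsto (fun n : ℕ => (n : ℝ)⁻¹ * ∑ j ∈ Finset.range n, h i (X₁ (T^[j] ω))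
            - ∫ x, h i x ∂μ) atTop (𝓝 0) := by
          have := (hω i).2.sub_const (∫ x, h i x ∂μ)
          simpa using this
        have h2 : Tendsto (fun n : ℕ => (n : ℝ)⁻¹ * ∑ j ∈ Finset.range n, g i (X₁ (T^[j] ω))
            - ∫ x, g i x ∂μ) atTop (𝓝 0) := by
          have := (hω i).1.sub_const (∫ x, g i x ∂μ)
          simpa using this
        have h3 := h1.abs.add h2.abs
        simpa using h3
      simpa using hz
    have hev : ∀ᶠ n in atTop, B n < 1 / ((m:ℝ) + 1) := hBtend.eventually_lt_const hε'
    filter_upwards [hev] with n hBn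
    refine Real.iSup_le ?_ (by positivity)
    rintro ⟨f, hf⟩
    show |(n : ℝ)⁻¹ * ∑ i ∈ Finset.range n, f (X₁ (T^[i] ω)) - ∫ x, f x ∂μ|
      ≤ 2 / ((m : ℝ) + 1)
    obtain ⟨i, hi⟩ := hcov f hf
    have hnn : (0:ℝ) ≤ (n:ℝ)⁻¹ := by positivity
    have hint_g := (hgh i).2.2.1
    have hint_h := (hgh i).2.2.2.1
    have hεi := (hgh i).2.2.2.2.2
    rw [integral_sub hint_h hint_g] at hεi
    have hIhf : ∫ x, h i x ∂μ - ∫ x, f x ∂μ ≤ 1 / ((m:ℝ)+1) := by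
      have h1 : ∫ x, (h i x - f x) ∂μ ≤ ∫ x, (h i x - g i x) ∂μ := by
        apply integral_mono (hint_h.sub (hfint f hf)) (hint_h.sub hint_g)
        intro x
        have := (hi x).1
        simp only [Pi.sub_apply]
        linarith
      rw [integral_sub hint_h (hfint f hf), integral_sub hint_h hint_g] at h1
      linarith
    have hIfg : ∫ x, f x ∂μ - ∫ x, g i x ∂μ ≤ 1 / ((m:ℝ)+1) := by
      have h1 : ∫ x, (f x - g i x) ∂μ ≤ ∫ x, (h i x - g i x) ∂μ := by
        apply integral_mono ((hfint f hf).sub hint_g) (hint_h.sub hint_g)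
        intro x
        have := (hi x).2
        simp only [Pi.sub_apply]
        linarith
      rw [integral_sub (hfint f hf) hint_g, integral_sub hint_h hint_g] at h1
      linarith
    have hSub : (n:ℝ)⁻¹ * ∑ j ∈ Finset.range n, f (X₁ (T^[j] ω))
        ≤ (n:ℝ)⁻¹ * ∑ j ∈ Finset.range n, h i (X₁ (T^[j] ω)) :=
      mul_le_mul_of_nonneg_left (Finset.sum_le_sum fun j _ => (hi _).2) hnn
    have hSlb : (n:ℝ)⁻¹ * ∑ j ∈ Finset.range n, g i (X₁ (T^[j] ω))
        ≤ (n:ℝ)⁻¹ * ∑ j ∈ Finset.range n, f (X₁ (T^[j] ω)) :=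
      mul_le_mul_of_nonneg_left (Finset.sum_le_sum fun j _ => (hi _).1) hnn
    have hterm : |(n : ℝ)⁻¹ * ∑ j ∈ Finset.range n, h i (X₁ (T^[j] ω)) - ∫ x, h i x ∂μ| +
        |(n : ℝ)⁻¹ * ∑ j ∈ Finset.range n, g i (X₁ (T^[j] ω)) - ∫ x, g i x ∂μ| ≤ B n := by
      rw [hB]
      exact Finset.single_le_sum (f := fun i => |(n : ℝ)⁻¹ * ∑ j ∈ Finset.range n,
          h i (X₁ (T^[j] ω)) - ∫ x, h i x ∂μ| + |(n : ℝ)⁻¹ * ∑ j ∈ Finset.range n,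
          g i (X₁ (T^[j] ω)) - ∫ x, g i x ∂μ|)
        (fun i _ => by positivity) (Finset.mem_univ i)
    have habs1 := le_abs_self ((n : ℝ)⁻¹ * ∑ j ∈ Finset.range n, h i (X₁ (T^[j] ω))
      - ∫ x, h i x ∂μ)
    have habs2 := neg_abs_le ((n : ℝ)⁻¹ * ∑ j ∈ Finset.range n, g i (X₁ (T^[j] ω))
      - ∫ x, g i x ∂μ)
    have habs3 := abs_nonneg ((n : ℝ)⁻¹ * ∑ j ∈ Finset.range n, h i (X₁ (T^[j] ω))
      - ∫ x, h i x ∂μ)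
    have habs4 := abs_nonneg ((n : ℝ)⁻¹ * ∑ j ∈ Finset.range n, g i (X₁ (T^[j] ω))
      - ∫ x, g i x ∂μ)
    have hsplit : (2:ℝ) / ((m:ℝ) + 1) = 1 / ((m:ℝ) + 1) + 1 / ((m:ℝ) + 1) := by ring
    rw [abs_le]
    constructor
    · linarith
    · linarith
  have hae := ae_all_iff.mpr key
  filter_upwards [hae] with ω hω
  rw [Metric.tendsto_atTop]
  intro ε hε
  obtain ⟨m, hm⟩ := exists_nat_one_div_lt (show (0:ℝ) < ε / 2 by linarith)
  obtain ⟨N, hN⟩ := eventually_atTop.mp (hω m)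
  refine ⟨N, fun n hn => ?_⟩
  have h1 := hN n hn
  have h2 : 2 / ((m:ℝ) + 1) < ε := by
    have hp : (0:ℝ) < (m:ℝ) + 1 := by positivity
    rw [div_lt_iff₀ hp] at hm ⊢
    linarith
  rw [Real.dist_eq, sub_zero, abs_of_nonneg (Real.iSup_nonneg fun f => abs_nonneg _)]
  exact lt_of_le_of_lt h1 h2
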